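/- arXiv:1610.01526 — 2 statements merged into one kernel-verified Lean document; each statement's English description precedes it below -/
import Mathlib

section
/- Define φ(μ, σ²) = ∫ (1 + e^w)^{-1} (2πσ²)^{-1/2} exp(-(w-μ)²/(2σ²)) dw. Then φ satisfies the recursion φ(μ + σ², σ²) = e^{-μ - σ²/2} (1 - φ(μ, σ²)) for all μ ∈ R and σ² > 0. -/
/-!
Exponential tilting: multiplying the normal density with mean `μ` and variance `v` by
`e^(w - μ - v/2)` gives the normal density with mean `μ + v`. Hence
`φ(μ + v, v) = e^(-μ - v/2) · E[e^W / (1 + e^W)]` with `W ~ N(μ, v)`, and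
`e^w / (1 + e^w) = 1 - 1 / (1 + e^w)`.
-/

open MeasureTheory Real

/-- The logistic-normal integral `φ(μ, σ²)`, written with the explicit
normal density with mean `m` and variance `s2`. -/
noncomputable def logisticNormal (m s2 : ℝ) : ℝ :=
  ∫ w, (1 + Real.exp w)⁻¹ *
    ((Real.sqrt (2 * Real.pi * s2))⁻¹ * Real.exp (-((w - m) ^ 2) / (2 * s2)))

open ProbabilityTheory NNReal

theorem gaussianPDFReal_add_var (μ : ℝ) (v : ℝ≥0) (w : ℝ) :
    gaussianPDFReal (μ + v) v w = exp (w - μ - v / 2) * gaussianPDFReal μ v w := by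
  rcases eq_or_ne v 0 with rfl | hv
  · simp [gaussianPDFReal_zero_var]
  simp only [gaussianPDFReal_def]
  rw [mul_left_comm, ← exp_add]
  congr 2
  field_simp
  ring

theorem integral_mul_gaussianPDFReal_add_var (f : ℝ → ℝ) (μ : ℝ) (v : ℝ≥0) :
    ∫ w, f w * gaussianPDFReal (μ + v) v w
      = exp (-μ - v / 2) * ∫ w, f w * exp w * gaussianPDFReal μ v w := by
  rw [← integral_const_mul]
  congr 1 with w
  rw [gaussianPDFReal_add_var, show w - μ - v / 2 = (-μ - v / 2) + w by ring, exp_add]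
  ring

theorem inv_one_add_exp_mul_exp (w : ℝ) : (1 + exp w)⁻¹ * exp w = 1 - (1 + exp w)⁻¹ := by
  field_simp
  ring

theorem integrable_inv_one_add_exp_mul_gaussianPDFReal (μ : ℝ) (v : ℝ≥0) :
    Integrable fun w ↦ (1 + exp w)⁻¹ * gaussianPDFReal μ v w := by
  refine (integrable_gaussianPDFReal μ v).bdd_mul (c := 1) (by fun_prop) (ae_of_all _ fun w ↦ ?_)
  rw [norm_inv, norm_of_nonneg (by positivity)]
  exact inv_le_one_of_one_le₀ (le_add_of_nonneg_right (exp_nonneg w))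

theorem logisticNormal_coe_nnreal (m : ℝ) (v : ℝ≥0) :
    logisticNormal m v = ∫ w, (1 + exp w)⁻¹ * gaussianPDFReal m v w := by
  simp only [logisticNormal, gaussianPDFReal_def]

/-- Pirjol's recursion for the logistic-normal integral:
`φ(μ + σ², σ²) = e^{-μ - σ²/2} (1 - φ(μ, σ²))`. -/
theorem logisticNormal_recursion (m s2 : ℝ) (hs2 : 0 < s2) :
    logisticNormal (m + s2) s2 = Real.exp (-m - s2 / 2) * (1 - logisticNormal m s2) := by
  lift s2 to ℝ≥0 using hs2.le
  have hv : s2 ≠ 0 := by exact_mod_cast hs2.ne'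
  rw [logisticNormal_coe_nnreal, logisticNormal_coe_nnreal, integral_mul_gaussianPDFReal_add_var]
  simp only [inv_one_add_exp_mul_exp, sub_mul, one_mul]
  rw [integral_sub (integrable_gaussianPDFReal m s2)
    (integrable_inv_one_add_exp_mul_gaussianPDFReal m s2), integral_gaussianPDFReal_eq_one m hv]
end

section
/- Let h(η) = 1/(1+e^{-η}) be the inverse logit function and U ~ N(0, σ²), σ² > 0. For each κ ∈ R let a(κ) be the unique real number satisfying E[h(κ + U + a(κ))] = h(κ). Then a(κ) > 0 when κ > 0, a(κ) < 0 when κ < 0, and a(0) = 0. -/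
/-!
The mean `m(κ) = E[h(κ + U)]` is strictly increasing in `κ`, and the adjustment is defined by
`m(κ + a(κ)) = h(κ)`, so the sign of `a(κ)` is the sign of `h(κ) - m(κ)`. Pairing `U` with `-U`,
`2 m(κ) = E[h(κ + U) + h(κ - U)]`, and for `κ > 0`, `u ≠ 0` we have
`h(κ + u) + h(κ - u) < 2 h(κ)`. Hence `m(κ) < h(κ)` for `κ > 0`; the case `κ < 0` follows from
`h(-η) = 1 - h(η)`, which also gives `m(0) = 1/2 = h(0)`.
-/

open MeasureTheory ProbabilityTheory Real

/-- The inverse logit function `h(η) = 1/(1+e^{-η})`. -/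
noncomputable def invLogit (η : ℝ) : ℝ := (1 + Real.exp (-η))⁻¹

lemma invLogit_eq_sigmoid : invLogit = sigmoid := rfl

namespace Real

lemma sigmoid_eq_exp_div (x : ℝ) : sigmoid x = exp x / (1 + exp x) := by
  rw [sigmoid_def, exp_neg]
  field_simp
  ring

/-- With `X = exp (κ + u)`, `Y = exp (κ - u)`, `Z = exp κ` one has `X Y = Z²`, and then the left
side equals `(S + 2Z²) / (1 + S + Z²)` with `S = X + Y = 2 Z cosh u > 2 Z`; clearing
denominators, the inequality becomes `(Z - 1) (S - 2 Z) > 0`. -/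
lemma sigmoid_add_add_sigmoid_sub_lt {κ u : ℝ} (hκ : 0 < κ) (hu : u ≠ 0) :
    sigmoid (κ + u) + sigmoid (κ - u) < 2 * sigmoid κ := by
  simp only [sigmoid_eq_exp_div]
  have hprod : exp (κ + u) * exp (κ - u) = exp κ ^ 2 := by
    rw [← exp_add, sq, ← exp_add]; ring_nf
  have hsum : exp (κ + u) + exp (κ - u) = 2 * exp κ * cosh u := by
    rw [cosh_eq, exp_add, sub_eq_add_neg, exp_add]; ring
  have hZ : 1 < exp κ := one_lt_exp_iff.2 hκ
  have hS : 2 * exp κ < exp (κ + u) + exp (κ - u) := by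
    rw [hsum]
    nlinarith [one_lt_cosh.2 hu, exp_pos κ]
  rw [div_add_div _ _ (by positivity) (by positivity), ← mul_div_assoc,
    div_lt_div_iff₀ (by positivity) (by positivity)]
  nlinarith [mul_pos (sub_pos.2 hZ) (sub_pos.2 hS)]

end Real

noncomputable def meanSigmoid (μ : Measure ℝ) (κ : ℝ) : ℝ := ∫ u, sigmoid (κ + u) ∂μ

section meanSigmoid

variable {μ : Measure ℝ}

lemma integrable_sigmoid_comp [IsFiniteMeasure μ] {g : ℝ → ℝ} (hg : Measurable g) :
    Integrable (fun u => sigmoid (g u)) μ :=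
  .of_bound (continuous_sigmoid.measurable.comp hg).aestronglyMeasurable 1 <|
    .of_forall fun u => by
      rw [norm_of_nonneg (sigmoid_nonneg _)]
      exact sigmoid_le_one _

lemma meanSigmoid_strictMono [IsFiniteMeasure μ] [NeZero μ] : StrictMono (meanSigmoid μ) := by
  intro s t hst
  have hlt : ∀ u, sigmoid (s + u) < sigmoid (t + u) := fun u => sigmoid_lt (by linarith)
  have hpos : 0 < ∫ u, (sigmoid (t + u) - sigmoid (s + u)) ∂μ := by
    rw [integral_pos_iff_support_of_nonneg_ae (.of_forall fun u => (sub_pos.2 (hlt u)).le)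
      ((integrable_sigmoid_comp (by fun_prop)).sub (integrable_sigmoid_comp (by fun_prop)))]
    have hsupp : Function.support (fun u => sigmoid (t + u) - sigmoid (s + u)) = Set.univ :=
      Set.eq_univ_of_forall fun u => (sub_pos.2 (hlt u)).ne'
    rw [hsupp]
    exact Measure.measure_univ_pos.2 (NeZero.ne μ)
  rw [integral_sub (integrable_sigmoid_comp (by fun_prop))
    (integrable_sigmoid_comp (by fun_prop))] at hpos
  exact sub_pos.1 hpos

variable [IsProbabilityMeasure μ] [μ.IsNegInvariant]

lemma meanSigmoid_neg (κ : ℝ) : meanSigmoid μ (-κ) = 1 - meanSigmoid μ κ := by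
  calc meanSigmoid μ (-κ) = ∫ u, sigmoid (-(κ + u)) ∂μ := by
        rw [meanSigmoid, ← integral_neg_eq_self]
        simp only [neg_add]
    _ = ∫ u, (1 - sigmoid (κ + u)) ∂μ := by simp only [sigmoid_neg]
    _ = 1 - meanSigmoid μ κ := by
        rw [integral_sub (integrable_const 1) (integrable_sigmoid_comp (by fun_prop)),
          integral_const, probReal_univ, one_smul, meanSigmoid]

lemma meanSigmoid_zero : meanSigmoid μ 0 = sigmoid 0 := by
  have h := meanSigmoid_neg (μ := μ) 0
  rw [neg_zero] at h
  rw [sigmoid_zero]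
  linarith

lemma meanSigmoid_lt_sigmoid (hμ : μ {0}ᶜ ≠ 0) {κ : ℝ} (hκ : 0 < κ) :
    meanSigmoid μ κ < sigmoid κ := by
  have hflip : ∫ u, sigmoid (κ - u) ∂μ = meanSigmoid μ κ := by
    rw [meanSigmoid, ← integral_neg_eq_self]
    simp only [sub_neg_eq_add]
  have hint : Integrable (fun u => sigmoid (κ + u) + sigmoid (κ - u)) μ :=
    (integrable_sigmoid_comp (by fun_prop)).add (integrable_sigmoid_comp (by fun_prop))
  have hgap : ∀ u, u ≠ 0 → 0 < 2 * sigmoid κ - (sigmoid (κ + u) + sigmoid (κ - u)) :=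
    fun u hu => sub_pos.2 (sigmoid_add_add_sigmoid_sub_lt hκ hu)
  have hnonneg : ∀ u, 0 ≤ 2 * sigmoid κ - (sigmoid (κ + u) + sigmoid (κ - u)) := fun u => by
    rcases eq_or_ne u 0 with rfl | hu
    · simp [two_mul]
    · exact (hgap u hu).le
  have hpos : 0 < ∫ u, (2 * sigmoid κ - (sigmoid (κ + u) + sigmoid (κ - u))) ∂μ := by
    rw [integral_pos_iff_support_of_nonneg_ae (.of_forall hnonneg) ((integrable_const _).sub hint)]
    exact (pos_iff_ne_zero.2 hμ).trans_le (measure_mono fun u hu => (hgap u hu).ne')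
  rw [integral_sub (integrable_const _) hint,
    integral_add (integrable_sigmoid_comp (by fun_prop)) (integrable_sigmoid_comp (by fun_prop)),
    integral_const, probReal_univ, one_smul, hflip] at hpos
  unfold meanSigmoid at hpos ⊢
  linarith

lemma sigmoid_lt_meanSigmoid (hμ : μ {0}ᶜ ≠ 0) {κ : ℝ} (hκ : κ < 0) :
    sigmoid κ < meanSigmoid μ κ := by
  have h := meanSigmoid_lt_sigmoid hμ (neg_pos.2 hκ)
  rw [meanSigmoid_neg, sigmoid_neg] at h
  linarith

end meanSigmoid

instance isNegInvariant_gaussianReal_zero (v : NNReal) : (gaussianReal 0 v).IsNegInvariant :=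
  ⟨gaussianReal_map_neg.trans (by rw [neg_zero])⟩

lemma gaussianReal_compl_singleton {v : NNReal} (hv : v ≠ 0) (m x : ℝ) :
    gaussianReal m v {x}ᶜ = 1 := by
  rw [prob_compl_eq_one_sub (measurableSet_singleton x),
    gaussianReal_absolutelyContinuous m hv volume_singleton, tsub_zero]

/-- For a logit link with `U ~ N(0, σ²)`, `σ² > 0`, the adjustment `a(κ)`
satisfying `E[h(κ + U + a(κ))] = h(κ)` is positive for `κ > 0`, negative for
`κ < 0`, and zero at `κ = 0`. -/
theorem logit_adjustment_sign (σ2 : NNReal) (hσ : 0 < σ2) (a : ℝ → ℝ)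
    (ha : ∀ κ : ℝ, (∫ u, invLogit (κ + u + a κ) ∂(gaussianReal 0 σ2)) = invLogit κ) :
    (∀ κ : ℝ, 0 < κ → 0 < a κ) ∧ (∀ κ : ℝ, κ < 0 → a κ < 0) ∧ a 0 = 0 := by
  set μ := gaussianReal 0 σ2
  have hμ : μ {0}ᶜ ≠ 0 := by simp [μ, gaussianReal_compl_singleton hσ.ne']
  have hadj : ∀ κ, meanSigmoid μ (κ + a κ) = sigmoid κ := fun κ => by
    simpa only [meanSigmoid, add_right_comm, invLogit_eq_sigmoid] using ha κ
  have hmono : StrictMono (meanSigmoid μ) := meanSigmoid_strictMono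
  refine ⟨fun κ hκ => ?_, fun κ hκ => ?_, ?_⟩
  · have h := meanSigmoid_lt_sigmoid hμ hκ
    rw [← hadj κ, hmono.lt_iff_lt] at h
    linarith
  · have h := sigmoid_lt_meanSigmoid hμ hκ
    rw [← hadj κ, hmono.lt_iff_lt] at h
    linarith
  · simpa using hmono.injective ((hadj 0).trans meanSigmoid_zero.symm)
end
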